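/- Under gradient flow over the hierarchical tensor factorization objective, for any ν ∈ int(T), ν_c ∈ C(ν), r ∈ [R_ν], and t ≥ 0: d/dt ‖W^(ν)_{r,:}(t)‖² = 2·σ^(ν,r)(t)·⟨−∇L_H(W_H(t)), Ĉ^(ν,r)(t)⟩ = d/dt ‖W^(ν_c)_{:,r}(t)‖², where ⟨·,·⟩ is the Frobenius inner product. -/

import Mathlib

/-!
The weight matrix of a node `μ` enters the end tensor exactly once (leaf labels are distinct), so
the end tensor is linear in `W^(μ)` and `∂φ_H/∂W^(μ)_{i,j} = ⟨∇L_H(W_H), E_{i,j}⟩`, where `E_{i,j}`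
is the end tensor with `W^(μ)` replaced by the matrix unit at `(i,j)`. Summing against the entries
of the `r`'th row of `W^(ν)` gives `⟨∇L_H(W_H), E⟩` with `E` the end tensor in which only that row
of `W^(ν)` is kept, and `E = σ^(ν,r) Ĉ^(ν,r)`. Keeping instead only the `r`'th column of `W^(c)`
for a child `c` gives the same `E`, since both select the summand `r` of the recursion at `ν`.
Under gradient flow `d/dt Σ w² = -2 Σ w ∂φ_H/∂w`, which yields both identities.
-/

namespace HTF

/-- Rooted tree whose leaves are labeled by elements of `Fin N`. -/
inductive MTree (N : ℕ) : Type
  | leaf : Fin N → MTree N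
  | node : List (MTree N) → MTree N

noncomputable instance {N : ℕ} : DecidableEq (MTree N) := fun _ _ => Classical.dec _

namespace MTree

variable {N : ℕ}

/-- The list of leaf labels of the tree. -/
def leafList : MTree N → List (Fin N)
  | .leaf i => [i]
  | .node ts => ts.attach.flatMap fun t => t.1.leafList
decreasing_by simp only [MTree.node.sizeOf_spec]; have := List.sizeOf_lt_of_mem t.2; omega

/-- The label of a node: set of leaf indices appearing in its subtree. -/
def label (t : MTree N) : Finset (Fin N) := t.leafList.toFinset

/-- All nodes (subtrees) of the tree. -/
def nodes : MTree N → List (MTree N)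
  | .leaf i => [.leaf i]
  | .node ts => .node ts :: ts.attach.flatMap fun t => t.1.nodes
decreasing_by simp only [MTree.node.sizeOf_spec]; have := List.sizeOf_lt_of_mem t.2; omega

/-- The children of a node. -/
def children : MTree N → List (MTree N)
  | .leaf _ => []
  | .node ts => ts

/-- Interior (non-leaf) node. -/
def IsInterior : MTree N → Prop
  | .leaf _ => False
  | .node _ => True

/-- Every non-leaf node has at least one child. -/
def Branching : MTree N → Prop
  | .leaf _ => True
  | .node ts => ts ≠ [] ∧ ∀ t ∈ ts.attach, Branching t.1
decreasing_by simp only [MTree.node.sizeOf_spec]; have := List.sizeOf_lt_of_mem t.2; omega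

/-- A valid mode tree over `[N]`: it has exactly `N` leaves, labeled `{1},...,{N}`
(each index appearing exactly once), and interior nodes have children. -/
def Valid (t : MTree N) : Prop :=
  t.leafList.Nodup ∧ (∀ i : Fin N, i ∈ t.leafList) ∧ t.Branching

/-- The parent of node `ν` in the tree (first argument), if it exists. -/
noncomputable def parentIn : MTree N → MTree N → Option (MTree N)
  | .leaf _, _ => none
  | .node ts, ν =>
      if ν ∈ ts then some (.node ts)
      else ts.attach.findSome? fun t => parentIn t.1 ν
termination_by T _ => sizeOf T
decreasing_by simp only [MTree.node.sizeOf_spec]; have := List.sizeOf_lt_of_mem t.2; omega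

end MTree

open MTree

variable {N : ℕ} (D : Fin N → ℕ)

/-- Full index set of an order-`N` tensor with mode dimensions `D`. -/
abbrev Idx : Type := ∀ n, Fin (D n)

/-- The intermediate tensors `W^(ν,r)` of a hierarchical tensor factorization with
local-component numbers `R` and weight matrices `W` (columns indexed by `ℕ`).
An order-`|label ν|` tensor is represented as a function of a full index tuple that
only depends on the coordinates in `label ν`; with this representation, the tensor
product of tensors over disjoint mode sets is pointwise multiplication and the mode
permutation `π_ν` is the identity. -/
noncomputable def interm (R : MTree N → ℕ) (W : ∀ ν : MTree N, Fin (R ν) → ℕ → ℝ) :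
    MTree N → ℕ → Idx D → ℝ
  | .leaf i, r => fun x =>
      if h : R (.leaf i) = D i then W (.leaf i) (Fin.cast h.symm (x i)) r else 0
  | .node ts, r => fun x =>
      ∑ r' : Fin (R (.node ts)),
        W (.node ts) r' r * (ts.attach.map fun t => interm R W t.1 (r' : ℕ) x).prod
decreasing_by simp only [MTree.node.sizeOf_spec]; have := List.sizeOf_lt_of_mem t.2; omega

/-- The end tensor `W_H` of the hierarchical tensor factorization with mode tree `T`. -/
noncomputable def endT (R : MTree N → ℕ) (W : ∀ ν : MTree N, Fin (R ν) → ℕ → ℝ)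
    (T : MTree N) : Idx D → ℝ :=
  interm D R W T 0

/-- Entry `(i, j)` of the weight matrix at node `ν` (zero outside the row range). -/
noncomputable def went (R : MTree N → ℕ) (W : ∀ ν : MTree N, Fin (R ν) → ℕ → ℝ)
    (ν : MTree N) (i j : ℕ) : ℝ :=
  if h : i < R ν then W ν ⟨i, h⟩ j else 0

/-- `R_{Pa(ν)}` : the number of local components at the parent of `ν` in `T`
(`1` if `ν` is the root). -/
noncomputable def Rpar (R : MTree N → ℕ) (T ν : MTree N) : ℕ :=
  if ν = T then 1 else ((parentIn T ν).map R).getD 0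

/-- Replace the weight matrix at node `μ` by `A`, keeping all other weight matrices. -/
noncomputable def replace (R : MTree N → ℕ) (W : ∀ ν : MTree N, Fin (R ν) → ℕ → ℝ)
    (μ : MTree N) (A : Fin (R μ) → ℕ → ℝ) : ∀ ν : MTree N, Fin (R ν) → ℕ → ℝ :=
  fun ν => if h : ν = μ then fun i j => A (Fin.cast (congrArg R h) i) j else W ν

/-- Frobenius (Euclidean) inner product of order-`N` tensors. -/
noncomputable def tinner (A B : Idx D → ℝ) : ℝ := ∑ x, A x * B x

/-- Frobenius norm of an order-`N` tensor. -/
noncomputable def tnorm (A : Idx D → ℝ) : ℝ := Real.sqrt (∑ x, (A x) ^ 2)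

/-- Frobenius norm of an order-`|s|` tensor represented as a function of a full index
tuple depending only on the coordinates in `s` (so that the sum over the full index
set over-counts each entry `∏_{n ∉ s} D n` times). -/
noncomputable def rnorm (s : Finset (Fin N)) (A : Idx D → ℝ) : ℝ :=
  Real.sqrt ((∑ x, (A x) ^ 2) / ∏ n ∈ sᶜ, (D n : ℝ))

/-- Squared norm of the `r`'th column of the weight matrix at node `c`. -/
noncomputable def colSq (R : MTree N → ℕ) (W : ∀ ν : MTree N, Fin (R ν) → ℕ → ℝ)
    (c : MTree N) (r : ℕ) : ℝ :=
  ∑ i : Fin (R c), (W c i r) ^ 2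

/-- Squared norm of the `r`'th row of the weight matrix at node `ν` of `T`. -/
noncomputable def rowSq (R : MTree N → ℕ) (W : ∀ ν : MTree N, Fin (R ν) → ℕ → ℝ)
    (T ν : MTree N) (r : ℕ) : ℝ :=
  ∑ j : Fin (Rpar R T ν), (went R W ν r (j : ℕ)) ^ 2

/-- `σ^(ν,r)` : the norm of the `(ν,r)`'th local component, i.e. the product of the
norms of the vectors in `LC(ν,r)` (the `r`'th row of `W^(ν)` together with the `r`'th
columns of the weight matrices of the children of `ν`). -/
noncomputable def sigmaLoc (R : MTree N → ℕ) (W : ∀ ν : MTree N, Fin (R ν) → ℕ → ℝ)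
    (T ν : MTree N) (r : ℕ) : ℝ :=
  Real.sqrt (rowSq R W T ν r) * (ν.children.map fun c => Real.sqrt (colSq R W c r)).prod

/-- `PadR_r(W^(ν)_{r,:})` : the matrix whose `r`'th row is the `r`'th row of `W^(ν)`
and whose other rows are zero. -/
noncomputable def padRow (R : MTree N → ℕ) (W : ∀ ν : MTree N, Fin (R ν) → ℕ → ℝ)
    (ν : MTree N) (r : ℕ) : Fin (R ν) → ℕ → ℝ :=
  fun i j => if (i : ℕ) = r then W ν i j else 0

/-- `PadC_r(W^(c)_{:,r})` : the matrix whose `r`'th column is the `r`'th column of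
`W^(c)` and whose other columns are zero. -/
noncomputable def padCol (R : MTree N → ℕ) (W : ∀ ν : MTree N, Fin (R ν) → ℕ → ℝ)
    (c : MTree N) (r : ℕ) : Fin (R c) → ℕ → ℝ :=
  fun i j => if j = r then W c i r else 0

/-- `Ĉ^(ν,r)` : the end tensor obtained by normalizing the `r`'th local component at
`ν` and setting all other local components at `ν` to zero, i.e. the end tensor computed
with `W^(ν)` replaced by `σ^{-1} · PadR_r(W^(ν)_{r,:})` (and `0` if `σ^(ν,r) = 0`). -/
noncomputable def hatC (R : MTree N → ℕ) (W : ∀ ν : MTree N, Fin (R ν) → ℕ → ℝ)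
    (T ν : MTree N) (r : ℕ) : Idx D → ℝ :=
  if sigmaLoc R W T ν r = 0 then 0
  else endT D R (replace R W ν fun i j =>
    if (i : ℕ) = r then (sigmaLoc R W T ν r)⁻¹ * W ν i j else 0) T

/-- The objective `φ_H = L_H ∘ (end tensor)`. -/
noncomputable def obj (L : (Idx D → ℝ) → ℝ) (R : MTree N → ℕ) (T : MTree N)
    (W : ∀ ν : MTree N, Fin (R ν) → ℕ → ℝ) : ℝ :=
  L (endT D R W T)

/-- Update the single entry `(i, j)` of the weight matrix at node `μ` to the value `s`. -/
noncomputable def upd (R : MTree N → ℕ) (W : ∀ ν : MTree N, Fin (R ν) → ℕ → ℝ)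
    (μ : MTree N) (i j : ℕ) (s : ℝ) : ∀ ν : MTree N, Fin (R ν) → ℕ → ℝ :=
  fun ν i' j' => if ν = μ ∧ (i' : ℕ) = i ∧ j' = j then s else W ν i' j'

/-- `∂φ_H/∂W^(μ)_{i,j}` : the partial derivative of the objective with respect to the
`(i,j)` entry of the weight matrix at node `μ`, at the point `W`. -/
noncomputable def dObj (L : (Idx D → ℝ) → ℝ) (R : MTree N → ℕ) (T : MTree N)
    (W : ∀ ν : MTree N, Fin (R ν) → ℕ → ℝ) (μ : MTree N) (i j : ℕ) : ℝ :=
  deriv (fun s : ℝ => obj D L R T (upd R W μ i j s)) (went R W μ i j)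

/-- `∇L(A)` : the gradient of a loss over tensors, entrywise. -/
noncomputable def tgrad (L : (Idx D → ℝ) → ℝ) (A : Idx D → ℝ) : Idx D → ℝ :=
  fun x => deriv (fun s : ℝ => L (Function.update A x s)) (A x)

/-- Local smoothness of the loss: its gradient is Lipschitz on compact sets. -/
def LocSmooth (L : (Idx D → ℝ) → ℝ) : Prop :=
  ∀ K : Set (Idx D → ℝ), IsCompact K → ∃ β : NNReal, LipschitzOnWith β (tgrad D L) K

/-- Gradient flow over the objective: each entry of each weight matrix moves against
its partial derivative. -/
def GradFlow (L : (Idx D → ℝ) → ℝ) (R : MTree N → ℕ) (T : MTree N)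
    (Wt : ℝ → ∀ ν : MTree N, Fin (R ν) → ℕ → ℝ) : Prop :=
  ∀ (ν : MTree N) (i : Fin (R ν)) (j : ℕ) (t : ℝ), 0 ≤ t →
    HasDerivAt (fun s : ℝ => Wt s ν i j) (- dObj D L R T (Wt t) ν (i : ℕ) j) t

/-- The matricization of an order-`N` tensor according to the index set `I` : the
matrix whose rows are indexed by the modes in `I` and whose columns are indexed by the
remaining modes. -/
noncomputable def matricize (I : Finset (Fin N)) (A : Idx D → ℝ) :
    Matrix (∀ i : {n // n ∈ I}, Fin (D i)) (∀ j : {n // n ∉ I}, Fin (D j)) ℝ :=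
  fun ρ κ => A fun n => if h : n ∈ I then ρ ⟨n, h⟩ else κ ⟨n, h⟩

/-- Frobenius norm of the weight matrix `W^(ν) ∈ ℝ^{R_ν × R_{Pa(ν)}}` at node `ν` of `T`. -/
noncomputable def wFro (R : MTree N → ℕ) (W : ∀ ν : MTree N, Fin (R ν) → ℕ → ℝ)
    (T ν : MTree N) : ℝ :=
  Real.sqrt (∑ i : Fin (R ν), ∑ j : Fin (Rpar R T ν), (W ν i (j : ℕ)) ^ 2)

/-- The weights obtained by pruning the `(ν,r)`'th local component: the `r`'th row of
`W^(ν)` and the `r`'th column of `W^(c)` for every child `c` of `ν` are set to zero. -/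
noncomputable def pruneLC (R : MTree N → ℕ) (W : ∀ ν : MTree N, Fin (R ν) → ℕ → ℝ)
    (ν : MTree N) (r : ℕ) : ∀ μ : MTree N, Fin (R μ) → ℕ → ℝ :=
  fun μ i j =>
    if μ = ν ∧ (i : ℕ) = r then 0
    else if μ ∈ ν.children ∧ j = r then 0
    else W μ i j

namespace MTree

variable {N : ℕ}

@[elab_as_elim]
theorem children_induction {motive : MTree N → Prop} (leaf : ∀ i, motive (leaf i))
    (node : ∀ ts, (∀ t ∈ ts, motive t) → motive (node ts)) (t : MTree N) : motive t := by
  cases t with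
  | leaf i => exact leaf i
  | node ts => exact node ts fun t _ => children_induction leaf node t
termination_by sizeOf t
decreasing_by simp only [MTree.node.sizeOf_spec]; have := List.sizeOf_lt_of_mem ‹t ∈ ts›; omega

@[simp]
theorem children_node (ts : List (MTree N)) : (node ts).children = ts := rfl

theorem leafList_node (ts : List (MTree N)) : (node ts).leafList = ts.flatMap leafList := by
  rw [leafList]; simp [List.flatMap]

theorem nodes_leaf (i : Fin N) : (leaf i).nodes = [leaf i] := by
  rw [nodes]

theorem nodes_node (ts : List (MTree N)) : (node ts).nodes = node ts :: ts.flatMap nodes := by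
  rw [nodes]; simp [List.flatMap]

theorem branching_node {ts : List (MTree N)} :
    (node ts).Branching ↔ ts ≠ [] ∧ ∀ t ∈ ts, t.Branching := by
  rw [Branching]; simp

theorem mem_nodes_node {ts : List (MTree N)} {μ : MTree N} :
    μ ∈ (node ts).nodes ↔ μ = node ts ∨ ∃ t ∈ ts, μ ∈ t.nodes := by
  simp [nodes_node]

theorem self_mem_nodes (t : MTree N) : t ∈ t.nodes := by
  cases t <;> simp [nodes_leaf, nodes_node]

theorem mem_nodes_node_of_mem {ts : List (MTree N)} {t μ : MTree N} (ht : t ∈ ts)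
    (hμ : μ ∈ t.nodes) : μ ∈ (node ts).nodes :=
  mem_nodes_node.2 (.inr ⟨t, ht, hμ⟩)

theorem mem_nodes_of_mem_children {ν c : MTree N} (hc : c ∈ ν.children) : c ∈ ν.nodes := by
  cases ν with
  | leaf i => simp [children] at hc
  | node ts => exact mem_nodes_node_of_mem hc (self_mem_nodes c)

theorem mem_nodes_trans {S ν μ : MTree N} (hμ : μ ∈ ν.nodes) (hν : ν ∈ S.nodes) :
    μ ∈ S.nodes := by
  induction S using children_induction with
  | leaf i => simp_all [nodes_leaf]
  | node ts ih =>
      obtain rfl | ⟨t, ht, hνt⟩ := mem_nodes_node.1 hν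
      · exact hμ
      · exact mem_nodes_node_of_mem ht (ih t ht hνt)

theorem sizeOf_le_of_mem_nodes {t μ : MTree N} (hμ : μ ∈ t.nodes) : sizeOf μ ≤ sizeOf t := by
  induction t using children_induction with
  | leaf i => simp_all [nodes_leaf]
  | node ts ih =>
      obtain rfl | ⟨t, ht, hμt⟩ := mem_nodes_node.1 hμ
      · rfl
      · have := ih t ht hμt
        have := List.sizeOf_lt_of_mem ht
        simp only [node.sizeOf_spec]
        omega

theorem node_not_mem_nodes {ts : List (MTree N)} {t μ : MTree N} (ht : t ∈ ts)
    (hμ : μ ∈ t.nodes) : node ts ∉ μ.nodes := fun h => by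
  have := sizeOf_le_of_mem_nodes h
  have := sizeOf_le_of_mem_nodes hμ
  have := List.sizeOf_lt_of_mem ht
  simp only [node.sizeOf_spec] at *
  omega

theorem leafList_subset_of_mem_nodes {t μ : MTree N} (hμ : μ ∈ t.nodes) :
    μ.leafList ⊆ t.leafList := by
  induction t using children_induction with
  | leaf i => simp_all [nodes_leaf]
  | node ts ih =>
      obtain rfl | ⟨t, ht, hμt⟩ := mem_nodes_node.1 hμ
      · exact List.Subset.refl _
      · rw [leafList_node]
        exact fun ℓ hℓ => List.mem_flatMap.2 ⟨t, ht, ih t ht hμt hℓ⟩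

theorem leafList_ne_nil {t : MTree N} (hb : t.Branching) : t.leafList ≠ [] := by
  induction t using children_induction with
  | leaf i => simp [leafList]
  | node ts ih =>
      obtain ⟨hne, hall⟩ := branching_node.1 hb
      obtain ⟨t, ht⟩ := List.exists_mem_of_ne_nil ts hne
      obtain ⟨ℓ, hℓ⟩ := List.exists_mem_of_ne_nil _ (ih t ht (hall t ht))
      rw [leafList_node]
      exact List.ne_nil_of_mem (List.mem_flatMap.2 ⟨t, ht, hℓ⟩)

/-- On such trees every node occurs at a single position, so its weight matrix enters the end
tensor only once. -/
def WellLabeled (t : MTree N) : Prop :=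
  t.leafList.Nodup ∧ t.Branching

theorem Valid.wellLabeled {t : MTree N} (h : t.Valid) : t.WellLabeled :=
  ⟨h.1, h.2.2⟩

theorem WellLabeled.of_mem_nodes {t μ : MTree N} (h : t.WellLabeled) (hμ : μ ∈ t.nodes) :
    μ.WellLabeled := by
  induction t using children_induction with
  | leaf i => simp_all [nodes_leaf]
  | node ts ih =>
      obtain rfl | ⟨t, ht, hμt⟩ := mem_nodes_node.1 hμ
      · exact h
      · have hnd := h.1
        rw [leafList_node, List.nodup_flatMap] at hnd
        exact ih t ht ⟨hnd.1 t ht, (branching_node.1 h.2).2 t ht⟩ hμt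

theorem WellLabeled.not_mem_nodes_of_split {ts l₁ l₂ : List (MTree N)} {t₀ t μ : MTree N}
    (h : (node ts).WellLabeled) (hsplit : ts = l₁ ++ t₀ :: l₂) (hμ : μ ∈ t₀.nodes)
    (ht : t ∈ l₁ ++ l₂) : μ ∉ t.nodes := fun hμt => by
  have hμb : μ.Branching :=
    (h.of_mem_nodes (mem_nodes_node_of_mem (by simp [hsplit]) hμ)).2
  obtain ⟨ℓ, hℓ⟩ := List.exists_mem_of_ne_nil _ (leafList_ne_nil hμb)
  have hℓ₀ := leafList_subset_of_mem_nodes hμ hℓ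
  have hℓt := leafList_subset_of_mem_nodes hμt hℓ
  have hnd := h.1
  rw [leafList_node, hsplit, List.nodup_flatMap, List.pairwise_append, List.pairwise_cons] at hnd
  rcases List.mem_append.1 ht with ht | ht
  · exact hnd.2.2.2 t ht t₀ List.mem_cons_self hℓt hℓ₀
  · exact hnd.2.2.1.1 t ht hℓ₀ hℓt

theorem exists_split_of_mem_nodes {ts : List (MTree N)} {μ : MTree N}
    (hμ : μ ∈ (node ts).nodes) (hne : μ ≠ node ts) :
    ∃ l₁ t₀ l₂, ts = l₁ ++ t₀ :: l₂ ∧ μ ∈ t₀.nodes := by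
  obtain rfl | ⟨t₀, ht₀, hμt₀⟩ := mem_nodes_node.1 hμ
  · exact absurd rfl hne
  · obtain ⟨l₁, l₂, hsplit⟩ := List.append_of_mem ht₀
    exact ⟨l₁, t₀, l₂, hsplit, hμt₀⟩

end MTree

open MTree

variable {N : ℕ} {D : Fin N → ℕ} {R : MTree N → ℕ}

abbrev Weights (R : MTree N → ℕ) : Type := ∀ ν : MTree N, Fin (R ν) → ℕ → ℝ

theorem interm_leaf (W : Weights R) (i : Fin N) (r : ℕ) (x : Idx D) :
    interm D R W (leaf i) r x =
      if h : R (leaf i) = D i then W (leaf i) (Fin.cast h.symm (x i)) r else 0 := by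
  rw [interm]

theorem interm_node (W : Weights R) (ts : List (MTree N)) (r : ℕ) (x : Idx D) :
    interm D R W (node ts) r x =
      ∑ r' : Fin (R (node ts)), W (node ts) r' r * (ts.map fun t => interm D R W t r' x).prod := by
  rw [interm]; simp

theorem prod_map_eq_of_split {ts l₁ l₂ : List (MTree N)} {t₀ : MTree N}
    (hsplit : ts = l₁ ++ t₀ :: l₂) (f : MTree N → ℝ) :
    (ts.map f).prod = f t₀ * ((l₁ ++ l₂).map f).prod := by
  rw [hsplit, (List.perm_middle.map f).prod_eq, List.map_cons, List.prod_cons]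

theorem interm_node_of_split {ts l₁ l₂ : List (MTree N)} {t₀ : MTree N}
    (hsplit : ts = l₁ ++ t₀ :: l₂) (W : Weights R) (r : ℕ) (x : Idx D) :
    interm D R W (node ts) r x =
      ∑ r' : Fin (R (node ts)), W (node ts) r' r *
        (interm D R W t₀ r' x * ((l₁ ++ l₂).map fun t => interm D R W t r' x).prod) := by
  simp only [interm_node, prod_map_eq_of_split hsplit]

theorem replace_self (W : Weights R) (μ : MTree N) (A : Fin (R μ) → ℕ → ℝ) :
    replace R W μ A μ = A := by
  simp [replace]

theorem replace_of_ne (W : Weights R) {μ ν : MTree N} (h : ν ≠ μ) (A : Fin (R μ) → ℕ → ℝ) :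
    replace R W μ A ν = W ν := by
  simp [replace, h]

theorem interm_congr {S : MTree N} {W₁ W₂ : Weights R} (h : ∀ μ ∈ S.nodes, W₁ μ = W₂ μ) :
    interm D R W₁ S = interm D R W₂ S := by
  induction S using children_induction with
  | leaf i => funext k x; rw [interm_leaf, interm_leaf, h _ (self_mem_nodes _)]
  | node ts ih =>
      funext k x
      rw [interm_node, interm_node, h _ (self_mem_nodes _)]
      refine Finset.sum_congr rfl fun r' _ => congrArg (_ * ·) (congrArg List.prod
        (List.map_congr_left fun t ht => ?_))
      rw [ih t ht fun μ hμ => h μ (mem_nodes_node_of_mem ht hμ)]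

theorem interm_replace_of_not_mem {S μ : MTree N} (h : μ ∉ S.nodes) (W : Weights R)
    (A : Fin (R μ) → ℕ → ℝ) : interm D R (replace R W μ A) S = interm D R W S :=
  interm_congr fun _ hρ => replace_of_ne W (ne_of_mem_of_not_mem hρ h) A

theorem interm_replace_node (W : Weights R) (ts : List (MTree N))
    (A : Fin (R (node ts)) → ℕ → ℝ) (r : ℕ) (x : Idx D) :
    interm D R (replace R W (node ts) A) (node ts) r x =
      ∑ r' : Fin (R (node ts)), A r' r * (ts.map fun t => interm D R W t r' x).prod := by
  rw [interm_node, replace_self]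
  refine Finset.sum_congr rfl fun r' _ => congrArg (_ * ·) (congrArg List.prod
    (List.map_congr_left fun t ht => ?_))
  rw [interm_replace_of_not_mem (node_not_mem_nodes ht (self_mem_nodes t))]

theorem interm_replace_self_congr (W : Weights R) (μ : MTree N) {A A' : Fin (R μ) → ℕ → ℝ}
    {r : ℕ} (h : ∀ i, A i r = A' i r) (x : Idx D) :
    interm D R (replace R W μ A) μ r x = interm D R (replace R W μ A') μ r x := by
  cases μ with
  | leaf i => simp only [interm_leaf, replace_self, h]
  | node ts => simp only [interm_replace_node, h]

theorem isLinearMap_interm_replace {S μ : MTree N} (hS : S.WellLabeled) (hμ : μ ∈ S.nodes)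
    (W : Weights R) (r : ℕ) (x : Idx D) :
    IsLinearMap ℝ fun A : Fin (R μ) → ℕ → ℝ => interm D R (replace R W μ A) S r x := by
  induction S using children_induction generalizing r with
  | leaf i =>
      obtain rfl : μ = leaf i := by simpa [nodes_leaf] using hμ
      simp only [interm_leaf, replace_self]
      constructor <;> intros <;> split_ifs <;> simp
  | node ts ih =>
      by_cases hroot : μ = node ts
      · subst hroot
        simp only [interm_replace_node]
        constructor <;> intros <;>
          simp [add_mul, Finset.sum_add_distrib, Finset.mul_sum, mul_assoc]
      obtain ⟨l₁, t₀, l₂, hsplit, hμt₀⟩ := exists_split_of_mem_nodes hμ hroot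
      have ht₀ : t₀ ∈ ts := by simp [hsplit]
      have hsib (A : Fin (R μ) → ℕ → ℝ) (r' : ℕ) :
          ((l₁ ++ l₂).map fun t => interm D R (replace R W μ A) t r' x) =
            (l₁ ++ l₂).map fun t => interm D R W t r' x :=
        List.map_congr_left fun t ht => by
          rw [interm_replace_of_not_mem (hS.not_mem_nodes_of_split hsplit hμt₀ ht)]
      have ih' (r' : ℕ) :=
        ih t₀ ht₀ (hS.of_mem_nodes (mem_nodes_node_of_mem ht₀ (self_mem_nodes t₀))) hμt₀ r'
      simp only [interm_node_of_split hsplit, replace_of_ne W (Ne.symm hroot), hsib]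
      constructor
      · intro A B
        simp only [(ih' _).map_add, add_mul, mul_add, Finset.sum_add_distrib]
      · intro a A
        simp only [(ih' _).map_smul, smul_eq_mul, Finset.mul_sum]
        exact Finset.sum_congr rfl fun _ _ => by ring

theorem interm_congr_of_subtree {S ν : MTree N} (hS : S.WellLabeled) (hν : ν ∈ S.nodes)
    {W₁ W₂ : Weights R} (hout : ∀ μ ∈ S.nodes, μ ∉ ν.nodes → W₁ μ = W₂ μ)
    (hin : interm D R W₁ ν = interm D R W₂ ν) : interm D R W₁ S = interm D R W₂ S := by
  induction S using children_induction with
  | leaf i =>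
      obtain rfl : ν = leaf i := by simpa [nodes_leaf] using hν
      exact hin
  | node ts ih =>
      by_cases hroot : ν = node ts
      · subst hroot; exact hin
      obtain ⟨l₁, t₀, l₂, hsplit, hνt₀⟩ := exists_split_of_mem_nodes hν hroot
      have ht₀ : t₀ ∈ ts := by simp [hsplit]
      have hsib (r' : ℕ) (x : Idx D) :
          ((l₁ ++ l₂).map fun t => interm D R W₁ t r' x) =
            (l₁ ++ l₂).map fun t => interm D R W₂ t r' x := by
        refine List.map_congr_left fun t ht => ?_
        have hts : t ∈ ts := hsplit ▸ List.perm_middle.mem_iff.2 (List.mem_cons_of_mem _ ht)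
        refine congrFun₂ (interm_congr fun μ hμ => ?_) r' x
        exact hout μ (mem_nodes_node_of_mem hts hμ) fun hμν =>
          hS.not_mem_nodes_of_split hsplit (mem_nodes_trans hμν hνt₀) ht hμ
      have hW : W₁ (node ts) = W₂ (node ts) :=
        hout _ (self_mem_nodes _) (node_not_mem_nodes ht₀ hνt₀)
      have h₀ : interm D R W₁ t₀ = interm D R W₂ t₀ :=
        ih t₀ ht₀ (hS.of_mem_nodes (mem_nodes_node_of_mem ht₀ (self_mem_nodes t₀))) hνt₀
          fun μ hμ => hout μ (mem_nodes_node_of_mem ht₀ hμ)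
      funext k x
      simp only [interm_node_of_split hsplit, hW, h₀, hsib]

theorem isLinearMap_endT_replace {T μ : MTree N} (hT : T.WellLabeled) (hμ : μ ∈ T.nodes)
    (W : Weights R) :
    IsLinearMap ℝ fun A : Fin (R μ) → ℕ → ℝ => endT D R (replace R W μ A) T :=
  ⟨fun A B => funext fun x => (isLinearMap_interm_replace hT hμ W 0 x).map_add A B,
    fun a A => funext fun x => (isLinearMap_interm_replace hT hμ W 0 x).map_smul a A⟩

theorem parentIn_node (ts : List (MTree N)) (ν : MTree N) :
    parentIn (node ts) ν =
      if ν ∈ ts then some (node ts) else ts.findSome? fun t => parentIn t ν := by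
  rw [parentIn]; simp

theorem parentIn_eq_none {t ν : MTree N} (h : ν ∉ t.nodes) : parentIn t ν = none := by
  induction t using children_induction with
  | leaf i => rw [parentIn]
  | node ts ih =>
      rw [parentIn_node, if_neg fun hν => h (mem_nodes_node_of_mem hν (self_mem_nodes ν)),
        List.findSome?_eq_none_iff]
      exact fun t ht => ih t ht fun hν => h (mem_nodes_node_of_mem ht hν)

theorem MTree.WellLabeled.exists_parentIn {T ν : MTree N} (hT : T.WellLabeled) (hν : ν ∈ T.nodes)
    (hne : ν ≠ T) : ∃ p ∈ T.nodes, ν ∈ p.children ∧ parentIn T ν = some p := by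
  induction T using children_induction with
  | leaf i => simp_all [nodes_leaf]
  | node ts ih =>
      by_cases hνts : ν ∈ ts
      · exact ⟨node ts, self_mem_nodes _, hνts, by rw [parentIn_node, if_pos hνts]⟩
      obtain ⟨l₁, t₀, l₂, hsplit, hνt₀⟩ := exists_split_of_mem_nodes hν hne
      have ht₀ : t₀ ∈ ts := by simp [hsplit]
      obtain ⟨p, hp, hνp, hpar⟩ :=
        ih t₀ ht₀ (hT.of_mem_nodes (mem_nodes_node_of_mem ht₀ (self_mem_nodes t₀))) hνt₀
          fun h => hνts (h ▸ ht₀)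
      refine ⟨p, mem_nodes_node_of_mem ht₀ hp, hνp, ?_⟩
      have hl₁ : (l₁.findSome? fun t => parentIn t ν) = none :=
        List.findSome?_eq_none_iff.2 fun t ht =>
          parentIn_eq_none (hT.not_mem_nodes_of_split hsplit hνt₀ (List.mem_append_left _ ht))
      rw [parentIn_node, if_neg hνts, hsplit, List.findSome?_append, hl₁, List.findSome?_cons,
        hpar]
      rfl

theorem MTree.WellLabeled.exists_parent {T ν : MTree N} (hT : T.WellLabeled) (hν : ν ∈ T.nodes)
    (hne : ν ≠ T) : ∃ p ∈ T.nodes, ν ∈ p.children ∧ Rpar R T ν = R p := by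
  obtain ⟨p, hp, hνp, hpar⟩ := hT.exists_parentIn hν hne
  exact ⟨p, hp, hνp, by rw [Rpar, if_neg hne, hpar]; rfl⟩

/-- Columns of weight matrices are indexed by `ℕ`; those from `R_{Pa(ν)}` on are junk that the
end tensor never reads. -/
theorem endT_replace_congr_cols {T ν : MTree N} (hT : T.WellLabeled) (hν : ν ∈ T.nodes)
    (W : Weights R) {A A' : Fin (R ν) → ℕ → ℝ} (h : ∀ i, ∀ j < Rpar R T ν, A i j = A' i j) :
    endT D R (replace R W ν A) T = endT D R (replace R W ν A') T := by
  funext x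
  by_cases hroot : ν = T
  · subst hroot
    exact interm_replace_self_congr W ν (fun i => h i 0 (by simp [Rpar])) x
  obtain ⟨p, hp, hνp, hRp⟩ := hT.exists_parent (R := R) hν hroot
  cases p with
  | leaf i => simp [children] at hνp
  | node us =>
      rw [children_node] at hνp
      obtain ⟨l₁, l₂, hsplit⟩ := List.append_of_mem hνp
      have hus : node us ≠ ν := by
        rintro rfl
        exact node_not_mem_nodes hνp (self_mem_nodes _) (self_mem_nodes _)
      have hsib (B : Fin (R ν) → ℕ → ℝ) (r' : ℕ) (y : Idx D) :
          ((l₁ ++ l₂).map fun t => interm D R (replace R W ν B) t r' y) =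
            (l₁ ++ l₂).map fun t => interm D R W t r' y :=
        List.map_congr_left fun t ht => by
          rw [interm_replace_of_not_mem ((hT.of_mem_nodes hp).not_mem_nodes_of_split hsplit
            (self_mem_nodes ν) ht)]
      refine congrFun₂ (interm_congr_of_subtree hT hp (fun μ _ hμ => ?_) ?_) 0 x
      · have hμν : μ ≠ ν := fun h => hμ (h ▸ mem_nodes_node_of_mem hνp (self_mem_nodes ν))
        rw [replace_of_ne W hμν, replace_of_ne W hμν]
      · funext k y
        simp only [interm_node_of_split hsplit, replace_of_ne W hus, hsib]
        refine Finset.sum_congr rfl fun r' _ => ?_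
        rw [interm_replace_self_congr W ν fun i => h i r' (by rw [hRp]; exact r'.isLt)]

theorem interm_replace_padCol (W : Weights R) (c : MTree N) (r k : ℕ) (x : Idx D) :
    interm D R (replace R W c (padCol R W c r)) c k x =
      if k = r then interm D R W c k x else 0 := by
  cases c with
  | leaf i => by_cases hk : k = r <;> simp [interm_leaf, replace_self, padCol, hk]
  | node us =>
      rw [interm_replace_node, interm_node]
      by_cases hk : k = r <;> simp [padCol, hk]

/-- Both sides select the summand `r` in the recursion at `ν`. -/
theorem endT_replace_padRow_eq_padCol {T ν c : MTree N} (hT : T.WellLabeled)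
    (hν : ν ∈ T.nodes) (hc : c ∈ ν.children) (W : Weights R) (r : ℕ) :
    endT D R (replace R W ν (padRow R W ν r)) T = endT D R (replace R W c (padCol R W c r)) T := by
  cases ν with
  | leaf i => simp [children] at hc
  | node ts =>
      rw [children_node] at hc
      obtain ⟨l₁, l₂, hsplit⟩ := List.append_of_mem hc
      have hcν : node ts ≠ c := by
        rintro rfl
        exact node_not_mem_nodes hc (self_mem_nodes _) (self_mem_nodes _)
      have hsib (r' : ℕ) (y : Idx D) :
          ((l₁ ++ l₂).map fun t => interm D R (replace R W c (padCol R W c r)) t r' y) =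
            (l₁ ++ l₂).map fun t => interm D R W t r' y :=
        List.map_congr_left fun t ht => by
          rw [interm_replace_of_not_mem ((hT.of_mem_nodes hν).not_mem_nodes_of_split hsplit
            (self_mem_nodes c) ht)]
      funext x
      refine congrFun₂ (interm_congr_of_subtree hT hν (fun μ _ hμ => ?_) ?_) 0 x
      · have hμν : μ ≠ node ts := fun h => hμ (h ▸ self_mem_nodes _)
        have hμc : μ ≠ c := fun h => hμ (h ▸ mem_nodes_node_of_mem hc (self_mem_nodes c))
        rw [replace_of_ne W hμν, replace_of_ne W hμc]
      · funext k y
        rw [interm_replace_node, interm_node_of_split hsplit, replace_of_ne W hcν]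
        refine Finset.sum_congr rfl fun r' _ => ?_
        rw [prod_map_eq_of_split hsplit, hsib, interm_replace_padCol, padRow]
        by_cases hr : (r' : ℕ) = r <;> simp [hr]

theorem eq_zero_of_sqrt_sum_sq_eq_zero {ι : Type*} [Fintype ι] {f : ι → ℝ}
    (h : Real.sqrt (∑ i, f i ^ 2) = 0) (i : ι) : f i = 0 := by
  rw [Real.sqrt_eq_zero (Finset.sum_nonneg fun i _ => sq_nonneg (f i)),
    Finset.sum_eq_zero_iff_of_nonneg fun i _ => sq_nonneg (f i)] at h
  exact pow_eq_zero_iff two_ne_zero |>.1 (h i (Finset.mem_univ i))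

theorem endT_replace_padRow {T ν : MTree N} (hT : T.WellLabeled) (hν : ν ∈ T.nodes)
    (W : Weights R) (r : ℕ) :
    endT D R (replace R W ν (padRow R W ν r)) T = sigmaLoc R W T ν r • hatC D R W T ν r := by
  have hlin := isLinearMap_endT_replace (D := D) hT hν W
  by_cases hσ : sigmaLoc R W T ν r = 0
  · rw [hσ, zero_smul]
    rcases mul_eq_zero.1 hσ with hrow | hcols
    · rw [endT_replace_congr_cols hT hν W (A' := 0) fun i j hj => ?_, hlin.map_zero]
      have := eq_zero_of_sqrt_sum_sq_eq_zero hrow ⟨j, hj⟩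
      by_cases hi : (i : ℕ) = r
      · subst hi
        simpa [padRow, went] using this
      · simp [padRow, hi]
    · obtain ⟨c, hc, hc0⟩ := List.mem_map.1 (List.prod_eq_zero_iff.1 hcols)
      have hpad : padCol R W c r = 0 := by
        funext i j
        simp [padCol, eq_zero_of_sqrt_sum_sq_eq_zero hc0 i]
      rw [endT_replace_padRow_eq_padCol hT hν hc, hpad,
        (isLinearMap_endT_replace hT (mem_nodes_trans (mem_nodes_of_mem_children hc) hν)
          W).map_zero]
  · have hmat : (fun (i : Fin (R ν)) (j : ℕ) =>
        if (i : ℕ) = r then (sigmaLoc R W T ν r)⁻¹ * W ν i j else 0) =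
          (sigmaLoc R W T ν r)⁻¹ • padRow R W ν r := by
      funext i j
      by_cases hi : (i : ℕ) = r <;> simp [padRow, hi]
    rw [hatC, if_neg hσ, hmat, hlin.map_smul, smul_inv_smul₀ hσ]

theorem fderiv_apply_eq_sum_tgrad {L : (Idx D → ℝ) → ℝ} (hL : Differentiable ℝ L)
    (A v : Idx D → ℝ) : fderiv ℝ L A v = ∑ x, v x * tgrad D L A x := by
  have htgrad (x : Idx D) : tgrad D L A x = fderiv ℝ L A (Pi.single x 1) :=
    ((hL A).hasFDerivAt.comp_hasDerivAt_of_eq (A x) (hasDerivAt_update A x (A x))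
      (Function.update_eq_self x A).symm).deriv
  conv_lhs => rw [← Finset.univ_sum_single v]
  simp only [map_sum, htgrad]
  refine Finset.sum_congr rfl fun x _ => ?_
  rw [← smul_eq_mul, ← map_smul, ← Pi.single_smul, smul_eq_mul, mul_one]

theorem replace_eq_self (W : Weights R) (μ : MTree N) : replace R W μ (W μ) = W := by
  funext ν
  by_cases h : ν = μ
  · subst h; exact replace_self W ν _
  · exact replace_of_ne W h _

theorem upd_eq_replace (W : Weights R) (μ : MTree N) (i : Fin (R μ)) (j : ℕ) (s : ℝ) :
    upd R W μ i j s =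
      replace R W μ (W μ +
        ((s - W μ i j) • Pi.single i (Pi.single j 1 : ℕ → ℝ) : Fin (R μ) → ℕ → ℝ)) := by
  funext ν i' j'
  by_cases h : ν = μ
  · subst h
    by_cases hi : i' = i
    · subst hi
      by_cases hj : j' = j
      · subst hj; simp [upd, replace]
      · simp [upd, replace, hj]
    · simp [upd, replace, hi, Fin.val_inj]
  · simp [upd, replace, h]

theorem dObj_eq_fderiv {L : (Idx D → ℝ) → ℝ} (hL : Differentiable ℝ L) {T μ : MTree N}
    (hT : T.WellLabeled) (hμ : μ ∈ T.nodes) (W : Weights R) (i : Fin (R μ)) (j : ℕ) :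
    dObj D L R T W μ i j =
      fderiv ℝ L (endT D R W T) (endT D R (replace R W μ (Pi.single i (Pi.single j 1))) T) := by
  set E : Fin (R μ) → ℕ → ℝ := Pi.single i (Pi.single j 1 : ℕ → ℝ)
  have hlin := isLinearMap_endT_replace (D := D) hT hμ W
  have hline (s : ℝ) : endT D R (upd R W μ i j s) T =
      endT D R W T + (s - W μ i j) • endT D R (replace R W μ E) T := by
    rw [upd_eq_replace, hlin.map_add, hlin.map_smul, replace_eq_self]
  have hderiv : HasDerivAt
      (fun s : ℝ => endT D R W T + (s - W μ i j) • endT D R (replace R W μ E) T)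
      (endT D R (replace R W μ E) T) (W μ i j) := by
    simpa using ((hasDerivAt_id _).sub_const (W μ i j)).smul_const
      (endT D R (replace R W μ E) T) |>.const_add (endT D R W T)
  simp only [dObj, obj, went, dif_pos i.isLt, hline]
  exact ((hL _).hasFDerivAt.comp_hasDerivAt_of_eq (W μ i j) hderiv (by simp)).deriv

theorem sum_mul_dObj {L : (Idx D → ℝ) → ℝ} (hL : Differentiable ℝ L) {T μ : MTree N}
    (hT : T.WellLabeled) (hμ : μ ∈ T.nodes) (W : Weights R) {ι : Type*} (s : Finset ι)
    (i : ι → Fin (R μ)) (j : ι → ℕ) :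
    ∑ m ∈ s, W μ (i m) (j m) * dObj D L R T W μ (i m) (j m) =
      fderiv ℝ L (endT D R W T) (endT D R (replace R W μ
        (∑ m ∈ s, W μ (i m) (j m) • Pi.single (i m) (Pi.single (j m) 1))) T) := by
  have hlin := isLinearMap_endT_replace (D := D) hT hμ W
  rw [← IsLinearMap.mk'_apply hlin, map_sum, map_sum]
  simp only [map_smul, IsLinearMap.mk'_apply, dObj_eq_fderiv hL hT hμ, smul_eq_mul]

theorem sum_row_mul_dObj {L : (Idx D → ℝ) → ℝ} (hL : Differentiable ℝ L) {T ν : MTree N}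
    (hT : T.WellLabeled) (hν : ν ∈ T.nodes) (W : Weights R) (r : Fin (R ν)) :
    ∑ j : Fin (Rpar R T ν), W ν r j * dObj D L R T W ν r j =
      fderiv ℝ L (endT D R W T) (endT D R (replace R W ν (padRow R W ν r)) T) := by
  rw [sum_mul_dObj hL hT hν W Finset.univ (fun _ => r)
    (fun j : Fin (Rpar R T ν) => (j : ℕ)),
    endT_replace_congr_cols hT hν W fun i j hj => ?_]
  rw [Finset.sum_apply, Finset.sum_apply]
  by_cases hi : i = r
  · subst hi
    simp only [padRow, Pi.smul_apply, Pi.single_apply, smul_eq_mul, if_true, mul_ite, mul_one,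
      mul_zero]
    rw [Fin.sum_univ_eq_sum_range (fun k => if j = k then W ν i k else 0), Finset.sum_ite_eq,
      if_pos (Finset.mem_range.2 hj)]
  · simp [padRow, hi, Fin.val_inj]

theorem sum_col_mul_dObj {L : (Idx D → ℝ) → ℝ} (hL : Differentiable ℝ L) {T c : MTree N}
    (hT : T.WellLabeled) (hc : c ∈ T.nodes) (W : Weights R) (r : ℕ) :
    ∑ i : Fin (R c), W c i r * dObj D L R T W c i r =
      fderiv ℝ L (endT D R W T) (endT D R (replace R W c (padCol R W c r)) T) := by
  rw [sum_mul_dObj hL hT hc W Finset.univ (fun i => i) fun _ => r]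
  congr 3
  funext i j
  by_cases hj : j = r <;> simp [padCol, Pi.single_apply, hj, ite_apply]

theorem GradFlow.hasDerivAt_sum_sq {L : (Idx D → ℝ) → ℝ} {T : MTree N} {Wt : ℝ → Weights R}
    (hflow : GradFlow D L R T Wt) {t : ℝ} (ht : 0 ≤ t) (μ : MTree N) {ι : Type*}
    (s : Finset ι) (i : ι → Fin (R μ)) (j : ι → ℕ) :
    HasDerivAt (fun τ => ∑ m ∈ s, Wt τ μ (i m) (j m) ^ 2)
      (-2 * ∑ m ∈ s, Wt t μ (i m) (j m) * dObj D L R T (Wt t) μ (i m) (j m)) t := by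
  refine (HasDerivAt.fun_sum fun m _ => (hflow μ (i m) (j m) t ht).fun_pow 2).congr_deriv ?_
  rw [Finset.mul_sum]
  exact Finset.sum_congr rfl fun m _ => by push_cast; ring

theorem neg_two_mul_fderiv_endT_replace_padRow {L : (Idx D → ℝ) → ℝ}
    (hL : Differentiable ℝ L) {T ν : MTree N} (hT : T.WellLabeled) (hν : ν ∈ T.nodes)
    (W : Weights R) (r : ℕ) :
    -2 * fderiv ℝ L (endT D R W T) (endT D R (replace R W ν (padRow R W ν r)) T) =
      2 * sigmaLoc R W T ν r *
        tinner D (fun x => -tgrad D L (endT D R W T) x) (hatC D R W T ν r) := by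
  simp only [endT_replace_padRow hT hν, fderiv_apply_eq_sum_tgrad hL, tinner, Pi.smul_apply,
    smul_eq_mul, neg_mul, Finset.sum_neg_distrib, mul_neg, neg_inj, Finset.mul_sum]
  exact Finset.sum_congr rfl fun x _ => by ring

end HTF

open HTF HTF.MTree in
theorem statement8_general {N : ℕ} (D : Fin N → ℕ) (L : (Idx D → ℝ) → ℝ)
    (hL : Differentiable ℝ L)
    (T : MTree N) (hT : T.Valid)
    (R : MTree N → ℕ)
    (Wt : ℝ → ∀ ν : MTree N, Fin (R ν) → ℕ → ℝ)
    (hflow : GradFlow D L R T Wt)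
    (ν : MTree N) (hν : ν ∈ T.nodes)
    (c : MTree N) (hc : c ∈ ν.children) (r : Fin (R ν))
    (t : ℝ) (ht : 0 ≤ t) :
    HasDerivAt (fun s : ℝ => rowSq R (Wt s) T ν (r : ℕ))
      (2 * sigmaLoc R (Wt t) T ν (r : ℕ) *
        tinner D (fun x => - tgrad D L (endT D R (Wt t) T) x) (hatC D R (Wt t) T ν (r : ℕ))) t ∧
    HasDerivAt (fun s : ℝ => colSq R (Wt s) c (r : ℕ))
      (2 * sigmaLoc R (Wt t) T ν (r : ℕ) *
        tinner D (fun x => - tgrad D L (endT D R (Wt t) T) x) (hatC D R (Wt t) T ν (r : ℕ))) t := by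
  have hT' := hT.wellLabeled
  rw [← neg_two_mul_fderiv_endT_replace_padRow hL hT' hν]
  constructor
  · have h := hflow.hasDerivAt_sum_sq ht ν Finset.univ (fun _ => r)
      fun j : Fin (Rpar R T ν) => (j : ℕ)
    rw [sum_row_mul_dObj hL hT' hν] at h
    simpa [rowSq, went] using h
  · have h := hflow.hasDerivAt_sum_sq ht c Finset.univ (fun i => i) fun _ => r
    rwa [sum_col_mul_dObj hL hT' (mem_nodes_trans (mem_nodes_of_mem_children hc) hν),
      ← endT_replace_padRow_eq_padCol hT' hν hc] at h

open HTF HTF.MTree in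
/-- under gradient flow, for any interior node `ν`, child `c` of `ν`,
`r ∈ [R_ν]`, and time `t ≥ 0`, the squared norms of the `r`'th row of `W^(ν)(t)` and of
the `r`'th column of `W^(c)(t)` both evolve with derivative
`2 σ^(ν,r)(t) ⟨-∇L_H(W_H(t)), Ĉ^(ν,r)(t)⟩`. -/
theorem statement8 {N : ℕ} (D : Fin N → ℕ) (L : (Idx D → ℝ) → ℝ)
    (hL : Differentiable ℝ L) (hLs : LocSmooth D L) (hL0 : ∀ A, 0 ≤ L A)
    (T : MTree N) (hT : T.Valid)
    (R : MTree N → ℕ) (hR : ∀ i : Fin N, R (MTree.leaf i) = D i)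
    (Wt : ℝ → ∀ ν : MTree N, Fin (R ν) → ℕ → ℝ)
    (hflow : GradFlow D L R T Wt)
    (ν : MTree N) (hν : ν ∈ T.nodes) (hint : ν.IsInterior)
    (c : MTree N) (hc : c ∈ ν.children) (r : Fin (R ν))
    (t : ℝ) (ht : 0 ≤ t) :
    HasDerivAt (fun s : ℝ => rowSq R (Wt s) T ν (r : ℕ))
      (2 * sigmaLoc R (Wt t) T ν (r : ℕ) *
        tinner D (fun x => - tgrad D L (endT D R (Wt t) T) x) (hatC D R (Wt t) T ν (r : ℕ))) t ∧
    HasDerivAt (fun s : ℝ => colSq R (Wt s) c (r : ℕ))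
      (2 * sigmaLoc R (Wt t) T ν (r : ℕ) *
        tinner D (fun x => - tgrad D L (endT D R (Wt t) T) x) (hatC D R (Wt t) T ν (r : ℕ))) t :=
  statement8_general D L hL T hT R Wt hflow ν hν c hc r t ht
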